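/- Fix σ² > 0, R1, R2 > 0 and a, b > 0, and set P1 = a·t, P2 = b·t. Then as t → ∞, t²·P_out,2 → ( 2^{R1+R2}·R1·ln 2 − (2^{R1} − 1) )·σ⁴/(a·b); equivalently P_out,2 ≃ ( 2^{R1+R2}·R1·ln 2 − (2^{R1}−1) )·σ⁴/(P1·P2) in the high-SNR limit. -/

import Mathlib

/-! With rates `r = σ²/P₁`, `s = σ²/P₂`, the pair `(γ₁, γ₂)` has density `r s e^{-(r x + s y)}` on
the positive quadrant, and there the outage event is the bounded region
`0 < x < 2^{R₁} - 1`, `0 < y < 2^{R₁+R₂}/(1+x) - 1`, of area `2^{R₁+R₂} R₁ ln 2 - (2^{R₁} - 1)`.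
On that region the density lies between `r s (1 - r (2^{R₁} - 1) - s (2^{R₁+R₂} - 1))` and `r s`,
so `P_out,2 = r s · area · (1 + O(1/t))`, while `t² r s = σ⁴/(a b)`. -/

open MeasureTheory ProbabilityTheory Real Filter

/-- The XP-HARQ outage probability after 2 rounds,
`P_out,2 = Pr(I₁ < R₁ ∧ I₁ + I₂ < R₁ + R₂)` with `I_k = log₂(1 + γ_k)`, where
`γ₁, γ₂` are independent exponential random variables with rates `σ²/P₁, σ²/P₂`,
realized canonically on `ℝ × ℝ` with the product of exponential measures. -/
noncomputable def poutTwo (σ2 P1 P2 R1 R2 : ℝ) : ℝ :=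
  (((expMeasure (σ2 / P1)).prod (expMeasure (σ2 / P2)))
    {p : ℝ × ℝ | Real.logb 2 (1 + p.1) < R1 ∧
      Real.logb 2 (1 + p.1) + Real.logb 2 (1 + p.2) < R1 + R2}).toReal

open Set
open scoped ENNReal Topology

namespace ProbabilityTheory

lemma exponentialPDF_le_ofReal {r : ℝ} (hr : 0 ≤ r) (x : ℝ) :
    exponentialPDF r x ≤ ENNReal.ofReal r := by
  rw [exponentialPDF_eq]
  refine ENNReal.ofReal_le_ofReal ?_
  split_ifs with hx
  · exact mul_le_of_le_one_right hr (exp_le_one_iff.2 (neg_nonpos.2 (mul_nonneg hr hx)))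
  · exact hr

lemma measurable_exponentialPDF (r : ℝ) : Measurable (exponentialPDF r) :=
  (measurable_exponentialPDFReal r).ennreal_ofReal

instance sFinite_expMeasure (r : ℝ) : SFinite (expMeasure r) := by
  unfold expMeasure gammaMeasure; infer_instance

lemma expMeasure_Iic_zero (r : ℝ) : expMeasure r (Iic 0) = 0 := by
  rw [expMeasure, gammaMeasure, withDensity_apply _ measurableSet_Iic,
    ← setLIntegral_congr Iio_ae_eq_Iic]
  exact lintegral_exponentialPDF_of_nonpos le_rfl

lemma prod_expMeasure_eq_withDensity (r s : ℝ) :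
    (expMeasure r).prod (expMeasure s) =
      volume.withDensity fun p : ℝ × ℝ => exponentialPDF r p.1 * exponentialPDF s p.2 := by
  rw [Measure.volume_eq_prod]
  exact prod_withDensity (measurable_exponentialPDF r) (measurable_exponentialPDF s)

lemma prod_expMeasure_compl_Ioi_prod_Ioi (r s : ℝ) :
    (expMeasure r).prod (expMeasure s) (Ioi 0 ×ˢ Ioi 0)ᶜ = 0 := by
  rw [compl_prod_eq_union, compl_Ioi]
  refine measure_union_null ?_ ?_ <;> rw [Measure.prod_prod, expMeasure_Iic_zero]
  exacts [zero_mul _, mul_zero _]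

variable {r s : ℝ}

lemma prod_expMeasure_le (hr : 0 ≤ r) (hs : 0 ≤ s) (S : Set (ℝ × ℝ)) :
    (expMeasure r).prod (expMeasure s) S ≤ ENNReal.ofReal (r * s) * volume S := by
  rw [prod_expMeasure_eq_withDensity, withDensity_apply', ← setLIntegral_const,
    ENNReal.ofReal_mul hr]
  exact setLIntegral_mono measurable_const fun p _ =>
    mul_le_mul' (exponentialPDF_le_ofReal hr _) (exponentialPDF_le_ofReal hs _)

lemma ofReal_mul_le_prod_expMeasure (hr : 0 ≤ r) (hs : 0 ≤ s) {M N : ℝ} {S : Set (ℝ × ℝ)}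
    (hS : S ⊆ Icc 0 M ×ˢ Icc 0 N) :
    ENNReal.ofReal (r * s * (1 - r * M - s * N)) * volume S ≤
      (expMeasure r).prod (expMeasure s) S := by
  rw [prod_expMeasure_eq_withDensity, withDensity_apply', ← setLIntegral_const]
  refine setLIntegral_mono (((measurable_exponentialPDF r).comp measurable_fst).mul
    ((measurable_exponentialPDF s).comp measurable_snd)) fun p hp => ?_
  obtain ⟨⟨hx0, hxM⟩, hy0, hyN⟩ := hS hp
  rw [exponentialPDF_of_nonneg hx0, exponentialPDF_of_nonneg hy0,
    ← ENNReal.ofReal_mul (by positivity)]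
  refine ENNReal.ofReal_le_ofReal ?_
  have hexp : 1 - (r * p.1 + s * p.2) ≤ exp (-(r * p.1)) * exp (-(s * p.2)) := by
    rw [← exp_add]; linarith [add_one_le_exp (-(r * p.1) + -(s * p.2))]
  have hrs : 0 ≤ r * s := mul_nonneg hr hs
  calc r * s * (1 - r * M - s * N) ≤ r * s * (1 - (r * p.1 + s * p.2)) :=
        mul_le_mul_of_nonneg_left (by nlinarith) hrs
    _ ≤ r * s * (exp (-(r * p.1)) * exp (-(s * p.2))) := mul_le_mul_of_nonneg_left hexp hrs
    _ = r * exp (-(r * p.1)) * (s * exp (-(s * p.2))) := by ring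

end ProbabilityTheory

lemma logb_one_add_lt_iff {b x R : ℝ} (hb : 1 < b) (hx : 0 < 1 + x) :
    logb b (1 + x) < R ↔ x < b ^ R - 1 := by
  rw [logb_lt_iff_lt_rpow hb hx, lt_sub_iff_add_lt']

lemma logb_one_add_add_logb_one_add_lt_iff {b x y R : ℝ} (hb : 1 < b) (hx : 0 < 1 + x)
    (hy : 0 < 1 + y) : logb b (1 + x) + logb b (1 + y) < R ↔ y < b ^ R / (1 + x) - 1 := by
  rw [← logb_mul hx.ne' hy.ne', logb_lt_iff_lt_rpow hb (mul_pos hx hy),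
    lt_sub_iff_add_lt', lt_div_iff₀' hx]

lemma integral_div_one_add_sub_one {c m : ℝ} (hm : -1 < m) :
    ∫ x in (0 : ℝ)..m, (c / (1 + x) - 1) = c * log (1 + m) - m := by
  have hpos : ∀ x ∈ uIcc 0 m, 0 < 1 + x := fun x hx => by
    rcases le_total 0 m with h | h <;> simp only [uIcc_of_le, uIcc_of_ge, h, mem_Icc] at hx <;>
      linarith [hx.1]
  have hinv : ∫ x in (0 : ℝ)..m, (1 + x)⁻¹ = log (1 + m) := by
    rw [intervalIntegral.integral_comp_add_left (fun x => x⁻¹), add_zero,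
      integral_inv_of_pos one_pos (by linarith), div_one]
  have hint : IntervalIntegrable (fun x : ℝ => c / (1 + x)) volume 0 m :=
    (continuousOn_const.div (by fun_prop) fun x hx => (hpos x hx).ne').intervalIntegrable
  simp_rw [intervalIntegral.integral_sub hint intervalIntegrable_const, div_eq_mul_inv,
    intervalIntegral.integral_const_mul, hinv]
  simp

def outageSet (R1 R2 : ℝ) : Set (ℝ × ℝ) :=
  {p | logb 2 (1 + p.1) < R1 ∧ logb 2 (1 + p.1) + logb 2 (1 + p.2) < R1 + R2}

lemma outageSet_inter_Ioi_prod_Ioi (R1 R2 : ℝ) :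
    outageSet R1 R2 ∩ Ioi 0 ×ˢ Ioi 0 =
      regionBetween 0 (fun x => 2 ^ (R1 + R2) / (1 + x) - 1) (Ioo 0 (2 ^ R1 - 1)) := by
  ext ⟨x, y⟩
  simp only [outageSet, regionBetween, mem_inter_iff, mem_ofPred_eq, mem_prod, mem_Ioi, mem_Ioo,
    Pi.zero_apply]
  constructor
  · rintro ⟨⟨h1, h2⟩, hx, hy⟩
    have h1x : 0 < 1 + x := by linarith
    exact ⟨⟨hx, (logb_one_add_lt_iff one_lt_two h1x).1 h1⟩, hy,
      (logb_one_add_add_logb_one_add_lt_iff one_lt_two h1x (by linarith)).1 h2⟩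
  · rintro ⟨⟨hx, h1⟩, hy, h2⟩
    have h1x : 0 < 1 + x := by linarith
    exact ⟨⟨(logb_one_add_lt_iff one_lt_two h1x).2 h1,
      (logb_one_add_add_logb_one_add_lt_iff one_lt_two h1x (by linarith)).2 h2⟩, hx, hy⟩

noncomputable def outageArea (R1 R2 : ℝ) : ℝ :=
  2 ^ (R1 + R2) * R1 * log 2 - (2 ^ R1 - 1)

lemma volume_outageSet_inter_Ioi_prod_Ioi {R1 R2 : ℝ} (hR1 : 0 ≤ R1) (hR2 : 0 ≤ R2) :
    volume (outageSet R1 R2 ∩ Ioi 0 ×ˢ Ioi 0) = ENNReal.ofReal (outageArea R1 R2) := by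
  have hm : 0 ≤ (2 : ℝ) ^ R1 - 1 := by linarith [one_le_rpow one_le_two hR1]
  have hT : (2 : ℝ) ^ R1 ≤ 2 ^ (R1 + R2) := rpow_le_rpow_of_exponent_le one_le_two (by linarith)
  have hcont : ContinuousOn (fun x : ℝ => 2 ^ (R1 + R2) / (1 + x) - 1) (Icc 0 (2 ^ R1 - 1)) :=
    (continuousOn_const.div (by fun_prop) fun x hx => by linarith [hx.1]).sub continuousOn_const
  rw [outageSet_inter_Ioi_prod_Ioi, Measure.volume_eq_prod,
    volume_regionBetween_eq_integral (f := 0) integrableOn_zero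
      ((hcont.integrableOn_Icc).mono_set Ioo_subset_Icc_self) measurableSet_Ioo
      fun x hx => ?_]
  · rw [← integral_Ioc_eq_integral_Ioo, ← intervalIntegral.integral_of_le hm]
    simp only [Pi.sub_apply, Pi.zero_apply, sub_zero]
    rw [integral_div_one_add_sub_one (by linarith), add_sub_cancel, log_rpow two_pos,
      outageArea, mul_assoc]
  · have h1x : 0 < 1 + x := by linarith [hx.1]
    have : 1 ≤ 2 ^ (R1 + R2) / (1 + x) := (one_le_div h1x).2 (by linarith [hx.2])
    simp only [Pi.zero_apply]; linarith

lemma outageArea_nonneg {R1 R2 : ℝ} (hR1 : 0 ≤ R1) (hR2 : 0 ≤ R2) : 0 ≤ outageArea R1 R2 := by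
  have h2 : (0 : ℝ) < 2 ^ R1 := rpow_pos_of_pos two_pos R1
  have hT : (2 : ℝ) ^ R1 ≤ 2 ^ (R1 + R2) := rpow_le_rpow_of_exponent_le one_le_two (by linarith)
  have hlog : 1 - (2 ^ R1)⁻¹ ≤ R1 * log 2 := by
    rw [← log_rpow two_pos]; exact one_sub_inv_le_log_of_pos h2
  have hlog0 : 0 ≤ R1 * log 2 := mul_nonneg hR1 (log_nonneg one_le_two)
  have : 2 ^ R1 * (1 - (2 ^ R1)⁻¹) = (2 : ℝ) ^ R1 - 1 := by field_simp
  rw [outageArea, mul_assoc]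
  nlinarith

lemma prod_expMeasure_outageSet_bounds {r s R1 R2 : ℝ} (hr : 0 ≤ r) (hs : 0 ≤ s) (hR1 : 0 ≤ R1)
    (hR2 : 0 ≤ R2) :
    r * s * (1 - r * (2 ^ R1 - 1) - s * (2 ^ (R1 + R2) - 1)) * outageArea R1 R2 ≤
        ((expMeasure r).prod (expMeasure s) (outageSet R1 R2)).toReal ∧
      ((expMeasure r).prod (expMeasure s) (outageSet R1 R2)).toReal ≤
        r * s * outageArea R1 R2 := by
  have hG := outageArea_nonneg hR1 hR2
  rw [← measure_inter_conull (prod_expMeasure_compl_Ioi_prod_Ioi r s)]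
  have hup := prod_expMeasure_le hr hs (outageSet R1 R2 ∩ Ioi 0 ×ˢ Ioi 0)
  rw [volume_outageSet_inter_Ioi_prod_Ioi hR1 hR2, ← ENNReal.ofReal_mul (mul_nonneg hr hs)] at hup
  have hbox : outageSet R1 R2 ∩ Ioi 0 ×ˢ Ioi 0 ⊆
      Icc 0 (2 ^ R1 - 1) ×ˢ Icc 0 (2 ^ (R1 + R2) - 1) := by
    rw [outageSet_inter_Ioi_prod_Ioi]
    rintro ⟨x, y⟩ ⟨hx, hy⟩
    have : (2 : ℝ) ^ (R1 + R2) / (1 + x) ≤ 2 ^ (R1 + R2) :=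
      div_le_self (rpow_nonneg zero_le_two _) (by linarith [hx.1])
    exact ⟨⟨hx.1.le, hx.2.le⟩, hy.1.le, by linarith [hy.2]⟩
  have hlo := ofReal_mul_le_prod_expMeasure hr hs hbox
  rw [volume_outageSet_inter_Ioi_prod_Ioi hR1 hR2] at hlo
  constructor
  · calc _ ≤ max (r * s * (1 - r * (2 ^ R1 - 1) - s * (2 ^ (R1 + R2) - 1))) 0 *
          outageArea R1 R2 := mul_le_mul_of_nonneg_right (le_max_left _ _) hG
      _ = _ := by rw [ENNReal.toReal_mul, ENNReal.toReal_ofReal', ENNReal.toReal_ofReal hG]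
      _ ≤ _ := ENNReal.toReal_mono (ne_top_of_le_ne_top ENNReal.ofReal_ne_top hup) hlo
  · exact (ENNReal.toReal_mono ENNReal.ofReal_ne_top hup).trans_eq
      (ENNReal.toReal_ofReal (by positivity))

/-- With `P₁ = a·t`, `P₂ = b·t`, as `t → ∞`,
`t²·P_out,2 → (2^{R₁+R₂}·R₁·ln 2 − (2^{R₁} − 1))·σ⁴/(a·b)`; equivalently
`P_out,2 ≃ (2^{R₁+R₂}·R₁·ln 2 − (2^{R₁}−1))·σ⁴/(P₁·P₂)` in the high-SNR limit. -/
theorem outage_K2_highSNR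
    (σ2 R1 R2 a b : ℝ) (hσ : 0 < σ2) (hR1 : 0 < R1) (hR2 : 0 < R2)
    (ha : 0 < a) (hb : 0 < b) :
    Filter.Tendsto (fun t : ℝ => t ^ 2 * poutTwo σ2 (a * t) (b * t) R1 R2)
      Filter.atTop
      (nhds (((2:ℝ) ^ (R1 + R2) * R1 * Real.log 2 - ((2:ℝ) ^ R1 - 1))
        * σ2 ^ 2 / (a * b))) := by
  set G := outageArea R1 R2
  set K := σ2 ^ 2 / (a * b)
  change Tendsto _ atTop (𝓝 (G * σ2 ^ 2 / (a * b)))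
  rw [mul_div_assoc]
  have hrate : ∀ {c : ℝ}, 0 < c → Tendsto (fun t => σ2 / (c * t)) atTop (𝓝 0) := fun hc =>
    tendsto_const_nhds.div_atTop (tendsto_id.const_mul_atTop hc)
  have hlower : Tendsto (fun t => G * K * (1 - σ2 / (a * t) * (2 ^ R1 - 1) -
      σ2 / (b * t) * (2 ^ (R1 + R2) - 1))) atTop (𝓝 (G * K)) := by
    simpa using (((hrate ha).mul_const (2 ^ R1 - 1)).const_sub 1).sub
      ((hrate hb).mul_const (2 ^ (R1 + R2) - 1)) |>.const_mul (G * K)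
  have hK : ∀ t ≠ 0, t ^ 2 * (σ2 / (a * t) * (σ2 / (b * t))) = K := fun t ht => by
    simp only [K]; field_simp
  refine tendsto_of_tendsto_of_tendsto_of_le_of_le' hlower tendsto_const_nhds ?_ ?_ <;>
    filter_upwards [eventually_gt_atTop 0] with t ht <;>
    obtain ⟨hlo, hup⟩ := prod_expMeasure_outageSet_bounds (r := σ2 / (a * t)) (s := σ2 / (b * t))
      (by positivity) (by positivity) hR1.le hR2.le
  · calc _ = t ^ 2 * (σ2 / (a * t) * (σ2 / (b * t)) * (1 - σ2 / (a * t) * (2 ^ R1 - 1) -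
          σ2 / (b * t) * (2 ^ (R1 + R2) - 1)) * G) := by rw [← hK t ht.ne']; ring
      _ ≤ _ := mul_le_mul_of_nonneg_left hlo (by positivity)
  · calc _ ≤ t ^ 2 * (σ2 / (a * t) * (σ2 / (b * t)) * G) :=
          mul_le_mul_of_nonneg_left hup (by positivity)
      _ = G * K := by rw [← hK t ht.ne']; ring
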